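/- arXiv:2210.03165 — 7 statements merged into one kernel-verified Lean document; each statement's English description precedes it below -/
import Mathlib

section
/- Let D be a probability measure over X and let E_0, E_1, E_2 ⊆ X be measurable sets ('error sets' of h_0, h_1, h_2). Suppose D_0 is a probability measure on X with: D_0(E_0) ≤ ε; (1/2)D_0(E_1) + (1/2)D(E_1 | E_0) ≤ ε; (1/3)D_0(E_2) + (1/3)D(E_2 | E_0) + (1/3)D(E_2 | E_1) ≤ ε; and suppose D(E_t) ≤ D_0(E_t) + Δ for each t ∈ {0,1,2} where Δ ≥ 0. Then D(E_0 ∩ E_1) + D(E_0 ∩ E_2) + D(E_1 ∩ E_2) ≤ 11ε² + 8εΔ. -/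
open MeasureTheory

/-- Conditional probability `D(A | B) = D(A ∩ B) / D(B)` (equal to `0` when `D B = 0`). -/
noncomputable def condProb {X : Type*} [MeasurableSpace X]
    (D : Measure X) (A B : Set X) : ℝ :=
  (D (A ∩ B)).toReal / (D B).toReal

/-- Core computation in the three-round path dynamic benchmark upper bound. -/
theorem three_round_pairwise_bound {X : Type*} [MeasurableSpace X]
    (D D0 : Measure X) [IsProbabilityMeasure D] [IsProbabilityMeasure D0]
    (E0 E1 E2 : Set X)
    (hE0 : MeasurableSet E0) (hE1 : MeasurableSet E1) (hE2 : MeasurableSet E2)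
    (ε Δ : ℝ) (hε : 0 < ε) (hΔ : 0 ≤ Δ)
    (h0 : (D0 E0).toReal ≤ ε)
    (h1 : (1 / 2) * (D0 E1).toReal + (1 / 2) * condProb D E1 E0 ≤ ε)
    (h2 : (1 / 3) * (D0 E2).toReal + (1 / 3) * condProb D E2 E0
        + (1 / 3) * condProb D E2 E1 ≤ ε)
    (hd0 : (D E0).toReal ≤ (D0 E0).toReal + Δ)
    (hd1 : (D E1).toReal ≤ (D0 E1).toReal + Δ)
    (hd2 : (D E2).toReal ≤ (D0 E2).toReal + Δ) :
    (D (E0 ∩ E1)).toReal + (D (E0 ∩ E2)).toReal + (D (E1 ∩ E2)).toReal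
      ≤ 11 * ε ^ 2 + 8 * ε * Δ := by
  have key : ∀ A B : Set X,
      (D (A ∩ B)).toReal ≤ condProb D A B * (D B).toReal := by
    intro A B
    unfold condProb
    rcases eq_or_ne (D B) 0 with h | h
    · have hAB : D (A ∩ B) = 0 := measure_mono_null Set.inter_subset_right h
      simp [hAB, h]
    · rw [div_mul_cancel₀]
      exact ENNReal.toReal_ne_zero.mpr ⟨h, measure_ne_top D B⟩
  have cpnn : ∀ A B : Set X, 0 ≤ condProb D A B := by
    intro A B
    exact div_nonneg ENNReal.toReal_nonneg ENNReal.toReal_nonneg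
  have k01 := key E1 E0
  have k02 := key E2 E0
  have k12 := key E2 E1
  have n10 := cpnn E1 E0
  have n20 := cpnn E2 E0
  have n21 := cpnn E2 E1
  have nD0 : (0:ℝ) ≤ (D E0).toReal := ENNReal.toReal_nonneg
  have nD1 : (0:ℝ) ≤ (D E1).toReal := ENNReal.toReal_nonneg
  have nD01 : (0:ℝ) ≤ (D0 E1).toReal := ENNReal.toReal_nonneg
  have nD02 : (0:ℝ) ≤ (D0 E2).toReal := ENNReal.toReal_nonneg
  have c10 : condProb D E1 E0 ≤ 2 * ε := by linarith
  have c20 : condProb D E2 E0 ≤ 3 * ε := by linarith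
  have c21 : condProb D E2 E1 ≤ 3 * ε := by linarith
  have b0 : (D E0).toReal ≤ ε + Δ := by linarith
  have b1 : (D E1).toReal ≤ 2 * ε + Δ := by linarith
  have p01 : condProb D E1 E0 * (D E0).toReal ≤ 2 * ε * (ε + Δ) :=
    mul_le_mul c10 b0 nD0 (by positivity)
  have p02 : condProb D E2 E0 * (D E0).toReal ≤ 3 * ε * (ε + Δ) :=
    mul_le_mul c20 b0 nD0 (by positivity)
  have p12 : condProb D E2 E1 * (D E1).toReal ≤ 3 * ε * (2 * ε + Δ) :=
    mul_le_mul c21 b1 nD1 (by positivity)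
  have e01 : D (E0 ∩ E1) = D (E1 ∩ E0) := by rw [Set.inter_comm]
  have e02 : D (E0 ∩ E2) = D (E2 ∩ E0) := by rw [Set.inter_comm]
  have e12 : D (E1 ∩ E2) = D (E2 ∩ E1) := by rw [Set.inter_comm]
  rw [e01, e02, e12]
  nlinarith
end

section
/- Let ε ∈ (0, 1/2] with 1/ε ∈ ℕ, let d = 8/ε² (assume d ∈ ℕ), let k = 1, k' = 2k/ε = 2/ε, and let D be the uniform distribution on {1,...,d}. Define K = {1,...,k}, K_0 = {1,...,k'}, and for 1 ≤ t < T = 2/ε, K_t = K ∪ (k' + (t−1)(k'−k), k' + t(k'−k)]. Then: (a) K_t ∩ K_{t'} = K for all 0 ≤ t' < t < T; (b) D(K)/D(K_t) ≤ ε/2 for all t < T; (c) K_{T−1} ⊆ {1,..., 2k'/ε} ⊆ {1,...,d}; (d) every point of K is contained in every K_t, so any weighted majority of classifiers with error sets K_0,...,K_{T−1} has risk at least D(K) = k/d = ε²/8 under D. -/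
/-- The common error core: `K = {1}` (here `k = 1`). -/
def pathK : Finset ℕ := Finset.Icc 1 1

/-- The error sets `K_t` of the lower-bound construction, in the domain `{1,…,d}`
with `d = 8n²`, `ε = 1/n`, `k = 1`, `k' = 2n`, `T = 2n`:
`K_0 = {1,…,2n}` and for `1 ≤ t`, `K_t = K ∪ (k' + (t-1)(k'-1), k' + t(k'-1)]`. -/
def pathKt (n t : ℕ) : Finset ℕ :=
  if t = 0 then Finset.Icc 1 (2 * n)
  else pathK ∪ Finset.Ioc (2 * n + (t - 1) * (2 * n - 1)) (2 * n + t * (2 * n - 1))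

/-!
For `t ≥ 1`, `K_t` is `K = {1}` together with the `t`-th of a run of consecutive blocks of
length `2n - 1` starting right after `K_0 = [1, 2n]`. Distinct blocks are disjoint and lie
beyond `K_0`, so any two `K_t` meet exactly in `K`; each `K_t` has `2n` points, and the last
block ends at `2n + (2n - 1)² ≤ 4n²`.
-/

open Finset

def pathBlock (n s : ℕ) : Finset ℕ :=
  Ioc (2 * n + s * (2 * n - 1)) (2 * n + (s + 1) * (2 * n - 1))

lemma pathK_eq : pathK = {1} := Icc_self 1

lemma pathKt_zero (n : ℕ) : pathKt n 0 = Icc 1 (2 * n) := if_pos rfl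

lemma pathKt_succ (n s : ℕ) : pathKt n (s + 1) = pathK ∪ pathBlock n s := by
  simp [pathKt, pathBlock]

lemma pathK_subset_Icc {m : ℕ} (hm : 0 < m) : pathK ⊆ Icc 1 m := by
  rw [pathK_eq, singleton_subset_iff, mem_Icc]
  exact ⟨le_rfl, hm⟩

lemma lt_of_mem_pathBlock {n s x : ℕ} (hx : x ∈ pathBlock n s) : 2 * n < x := by
  have := (mem_Ioc.mp hx).1
  omega

lemma card_pathBlock (n s : ℕ) : (pathBlock n s).card = 2 * n - 1 := by
  rw [pathBlock, Nat.card_Ioc, add_one_mul]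
  omega

lemma disjoint_pathBlock {n s s' : ℕ} (h : s' < s) :
    Disjoint (pathBlock n s) (pathBlock n s') :=
  (Ioc_disjoint_Ioc_of_le (by gcongr; omega)).symm

lemma disjoint_Icc_pathBlock (n s : ℕ) : Disjoint (Icc 1 (2 * n)) (pathBlock n s) :=
  disjoint_left.mpr fun _ hx hx' => by
    have := (mem_Icc.mp hx).2
    have := lt_of_mem_pathBlock hx'
    omega

lemma disjoint_pathK_pathBlock {n : ℕ} (hn : 0 < n) (s : ℕ) : Disjoint pathK (pathBlock n s) :=
  (disjoint_Icc_pathBlock n s).mono_left (pathK_subset_Icc (by omega))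

lemma pathK_subset_pathKt {n : ℕ} (hn : 0 < n) (t : ℕ) : pathK ⊆ pathKt n t := by
  cases t with
  | zero => exact pathKt_zero n ▸ pathK_subset_Icc (by omega)
  | succ s => exact pathKt_succ n s ▸ subset_union_left

lemma card_pathKt {n : ℕ} (hn : 0 < n) (t : ℕ) : (pathKt n t).card = 2 * n := by
  cases t with
  | zero => simp [pathKt_zero]
  | succ s =>
    rw [pathKt_succ, card_union_of_disjoint (disjoint_pathK_pathBlock hn s), card_pathBlock,
      pathK_eq, card_singleton]
    omega

lemma pathKt_inter_pathKt {n t' t : ℕ} (hn : 0 < n) (h : t' < t) :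
    pathKt n t ∩ pathKt n t' = pathK := by
  obtain ⟨s, rfl⟩ : ∃ s, t = s + 1 := ⟨t - 1, by omega⟩
  rw [pathKt_succ]
  cases t' with
  | zero =>
    rw [pathKt_zero, union_inter_distrib_right,
      disjoint_iff_inter_eq_empty.mp (disjoint_Icc_pathBlock n s).symm, union_empty,
      inter_eq_left.mpr (pathK_subset_Icc (by omega))]
  | succ s' =>
    rw [pathKt_succ, ← union_inter_distrib_left,
      disjoint_iff_inter_eq_empty.mp (disjoint_pathBlock (by omega)), union_empty]

lemma pathKt_subset_Icc {n : ℕ} (hn : 0 < n) (t : ℕ) :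
    pathKt n t ⊆ Icc 1 (2 * n + t * (2 * n - 1)) := by
  cases t with
  | zero => simp [pathKt_zero]
  | succ s =>
    rw [pathKt_succ, union_subset_iff]
    refine ⟨pathK_subset_Icc (by omega), fun x hx => mem_Icc.mpr ⟨?_, (mem_Ioc.mp hx).2⟩⟩
    have := lt_of_mem_pathBlock hx
    omega

lemma pathKt_last_subset {n : ℕ} (hn : 0 < n) :
    pathKt n (2 * n - 1) ⊆ Icc 1 (4 * n ^ 2) := by
  refine (pathKt_subset_Icc hn _).trans (Icc_subset_Icc_right ?_)
  obtain ⟨m, rfl⟩ : ∃ m, n = m + 1 := ⟨n - 1, by omega⟩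
  have : 2 * (m + 1) - 1 = 2 * m + 1 := by omega
  rw [this]
  nlinarith

theorem path_lower_bound_construction_general (n : ℕ) :
    (∀ t' t : ℕ, t' < t → t < 2 * n → pathKt n t ∩ pathKt n t' = pathK) ∧
    (∀ t < 2 * n, ((pathK.card : ℚ) / ((pathKt n t).card : ℚ)) ≤ (1 / n) / 2) ∧
    (pathKt n (2 * n - 1) ⊆ Finset.Icc 1 (4 * n ^ 2) ∧
      Finset.Icc 1 (4 * n ^ 2) ⊆ Finset.Icc 1 (8 * n ^ 2)) ∧
    (∀ t < 2 * n, pathK ⊆ pathKt n t) ∧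
    ((pathK.card : ℚ) / ((8 : ℚ) * n ^ 2) = ((1 : ℚ) / n) ^ 2 / 8) ∧
    (∀ Err : Finset ℕ, pathK ⊆ Err →
      ((1 : ℚ) / n) ^ 2 / 8 ≤ ((Err ∩ Finset.Icc 1 (8 * n ^ 2)).card : ℚ) / ((8 : ℚ) * n ^ 2)) := by
  rcases Nat.eq_zero_or_pos n with rfl | hn
  · -- every clause is vacuous or, with `1 / 0 = 0`, reads `0 ≤ 0` / `0 = 0`
    simp [pathKt]
  have hK : (pathK.card : ℚ) / (8 * n ^ 2) = (1 / n) ^ 2 / 8 := by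
    rw [pathK_eq, card_singleton]
    ring
  have hIcc : Icc 1 (4 * n ^ 2) ⊆ Icc 1 (8 * n ^ 2) := Icc_subset_Icc_right (by nlinarith)
  refine ⟨fun _ _ h _ => pathKt_inter_pathKt hn h, fun t _ => ?_, ⟨pathKt_last_subset hn, hIcc⟩,
    fun t _ => pathK_subset_pathKt hn t, hK, fun Err hErr => ?_⟩
  · rw [pathK_eq, card_singleton, card_pathKt hn]
    exact le_of_eq (by push_cast; ring)
  · rw [← hK]
    gcongr
    exact subset_inter hErr (pathK_subset_Icc (by positivity))

/-- Combinatorial core of the `Ω(ε²)` lower bound for path dynamic benchmarks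
(`ε = 1/n ≤ 1/2`, `d = 8n²`, uniform `D`): (a) all pairwise intersections equal `K`;
(b) `D(K)/D(K_t) ≤ ε/2`; (c) the sets fit inside `{1,…,2k'/ε} ⊆ {1,…,d}`;
(d) `K` is in every `K_t`, so any error set containing `K` has uniform measure at
least `D(K) = 1/d = ε²/8`. -/
theorem path_lower_bound_construction (n : ℕ) (hn : 2 ≤ n) :
    (∀ t' t : ℕ, t' < t → t < 2 * n → pathKt n t ∩ pathKt n t' = pathK) ∧
    (∀ t < 2 * n, ((pathK.card : ℚ) / ((pathKt n t).card : ℚ)) ≤ (1 / n) / 2) ∧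
    (pathKt n (2 * n - 1) ⊆ Finset.Icc 1 (4 * n ^ 2) ∧
      Finset.Icc 1 (4 * n ^ 2) ⊆ Finset.Icc 1 (8 * n ^ 2)) ∧
    (∀ t < 2 * n, pathK ⊆ pathKt n t) ∧
    ((pathK.card : ℚ) / ((8 : ℚ) * n ^ 2) = ((1 : ℚ) / n) ^ 2 / 8) ∧
    (∀ Err : Finset ℕ, pathK ⊆ Err →
      ((1 : ℚ) / n) ^ 2 / 8 ≤ ((Err ∩ Finset.Icc 1 (8 * n ^ 2)).card : ℚ) / ((8 : ℚ) * n ^ 2)) :=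
  path_lower_bound_construction_general n
end

section
/- Consider the recursion δ_{t+1} ≥ ((t+1)/(t+2))·δ_t + (1/(t+2)) · 1/(1 + 2(t+1)(ε/δ)(1−δ)/(1−δ_t)) with δ_0 = δ ∈ (0,1) and ε > 0. Setting a = 4(ε/δ)(1−δ), if δ_t ≤ 1/2 for all relevant t, then for all t ≥ 1: δ_t ≥ δ/(t+1) + (t/(t+1)) · 1/(1 + a(t+1)). In particular, δ_t ≥ 1/(2(1 + 8(ε/δ)t)), so for t ≤ β·δ/ε one has δ_t ≥ 1/(2(1 + 8β)). -/
/-- Quantitative recursion from the unrealizable-setting theorem: lower bounds on the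
mass `δ_t` placed on the randomly-labeled region. With `a = 4(ε/δ)(1−δ)`, for all
`t ≥ 1`, `δ_t ≥ δ/(t+1) + (t/(t+1))·1/(1+a(t+1))`; in particular
`δ_t ≥ 1/(2(1+8(ε/δ)t))`, and for `t ≤ β·δ/ε`, `δ_t ≥ 1/(2(1+8β))`. -/
theorem unrealizable_mass_recursion
    (δseq : ℕ → ℝ) (δ ε : ℝ) (hδ0 : 0 < δ) (hδ1 : δ < 1) (hε : 0 < ε)
    (hinit : δseq 0 = δ)
    (hhalf : ∀ t, δseq t ≤ 1 / 2)
    (hrec : ∀ t : ℕ,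
      ((t : ℝ) + 1) / ((t : ℝ) + 2) * δseq t
        + (1 / ((t : ℝ) + 2)) *
          (1 / (1 + 2 * ((t : ℝ) + 1) * (ε / δ) * (1 - δ) / (1 - δseq t)))
      ≤ δseq (t + 1)) :
    ∀ t : ℕ, 1 ≤ t →
      (δ / ((t : ℝ) + 1)
          + ((t : ℝ) / ((t : ℝ) + 1)) *
            (1 / (1 + (4 * (ε / δ) * (1 - δ)) * ((t : ℝ) + 1)))
        ≤ δseq t) ∧
      (1 / (2 * (1 + 8 * (ε / δ) * (t : ℝ))) ≤ δseq t) ∧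
      (∀ β : ℝ, 0 ≤ β → (t : ℝ) ≤ β * δ / ε →
        1 / (2 * (1 + 8 * β)) ≤ δseq t) := by
  have h1δ : (0:ℝ) < 1 - δ := by linarith
  have hcpos : 0 < ε / δ := div_pos hε hδ0
  set c : ℝ := ε / δ with hc
  set a : ℝ := 4 * c * (1 - δ) with ha
  have hapos : 0 < a := by
    rw [ha]; exact mul_pos (by linarith : (0:ℝ) < 4 * c) h1δ
  have hd : ∀ t, (1:ℝ)/2 ≤ 1 - δseq t := fun t => by linarith [hhalf t]
  have hBpos : ∀ t : ℕ, (0:ℝ) < 1 + 2 * ((t:ℝ) + 1) * c * (1 - δ) / (1 - δseq t) := by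
    intro t
    have h1 : (0:ℝ) < 1 - δseq t := by linarith [hd t]
    have : 0 ≤ 2 * ((t:ℝ) + 1) * c * (1 - δ) / (1 - δseq t) := by positivity
    linarith
  have hApos : ∀ t : ℕ, (0:ℝ) < 1 + a * ((t:ℝ) + 1) := by
    intro t
    have : (0:ℝ) ≤ a * ((t:ℝ)+1) := by positivity
    linarith
  have hfrac : ∀ t : ℕ,
      1 / (1 + a * ((t:ℝ) + 1)) ≤ 1 / (1 + 2 * ((t:ℝ) + 1) * c * (1 - δ) / (1 - δseq t)) := by
    intro t
    apply one_div_le_one_div_of_le (hBpos t)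
    have h1 : (0:ℝ) < 1 - δseq t := by linarith [hd t]
    have hkey : (0:ℝ) ≤ (c * (1 - δ)) * (((t:ℝ)+1)) * (2 * (1 - δseq t) - 1) := by
      apply mul_nonneg
      · exact mul_nonneg (le_of_lt (mul_pos hcpos h1δ)) (by positivity)
      · linarith [hd t]
    have hB : 2 * ((t:ℝ) + 1) * c * (1 - δ) / (1 - δseq t) ≤ a * ((t:ℝ) + 1) := by
      rw [div_le_iff₀ h1, ha]
      nlinarith [hkey]
    linarith
  have main : ∀ t : ℕ, δ + (t:ℝ) * (1 / (1 + a * ((t:ℝ) + 1))) ≤ ((t:ℝ) + 1) * δseq t := by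
    intro t
    induction t with
    | zero => simp [hinit]
    | succ n ih =>
      have h2 : (0:ℝ) < (n:ℝ) + 2 := by positivity
      have h2' : ((n:ℝ) + 2) ≠ 0 := ne_of_gt h2
      have hr := hrec n
      have e : ∀ x y : ℝ, ((n:ℝ)+2) * (((n:ℝ)+1)/((n:ℝ)+2) * x + (1/((n:ℝ)+2)) * y)
          = ((n:ℝ)+1) * x + y := by
        intro x y; field_simp
      have hm : ((n:ℝ) + 1) * δseq n
          + 1 / (1 + 2 * ((n:ℝ) + 1) * c * (1 - δ) / (1 - δseq n))
          ≤ ((n:ℝ) + 2) * δseq (n + 1) := by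
        have h := mul_le_mul_of_nonneg_left hr (le_of_lt h2)
        rw [e] at h
        exact h
      have hmono : 1 / (1 + a * (((n:ℝ)+1) + 1)) ≤ 1 / (1 + a * ((n:ℝ) + 1)) := by
        apply one_div_le_one_div_of_le (hApos n)
        nlinarith [hapos, Nat.cast_nonneg (α := ℝ) n]
      have hmul : ((n:ℝ)+1) * (1 / (1 + a * (((n:ℝ)+1) + 1)))
          ≤ ((n:ℝ)+1) * (1 / (1 + a * ((n:ℝ) + 1))) :=
        mul_le_mul_of_nonneg_left hmono (by positivity)
      have hf := hfrac n
      push_cast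
      nlinarith [ih, hm, hf, hmul]
  intro t ht
  have ht1 : (1:ℝ) ≤ (t:ℝ) := by exact_mod_cast ht
  have htp : (0:ℝ) < (t:ℝ) + 1 := by positivity
  have part1 : δ / ((t:ℝ) + 1)
      + ((t:ℝ) / ((t:ℝ) + 1)) * (1 / (1 + a * ((t:ℝ) + 1))) ≤ δseq t := by
    have e : δ / ((t:ℝ) + 1) + ((t:ℝ) / ((t:ℝ) + 1)) * (1 / (1 + a * ((t:ℝ) + 1)))
        = (δ + (t:ℝ) * (1 / (1 + a * ((t:ℝ) + 1)))) / ((t:ℝ) + 1) := by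
      ring
    rw [e, div_le_iff₀ htp]
    nlinarith [main t]
  have h8pos : (0:ℝ) < 1 + 8 * c * (t:ℝ) := by positivity
  have hq : 1 / (1 + 8 * c * (t:ℝ)) ≤ 1 / (1 + a * ((t:ℝ) + 1)) := by
    apply one_div_le_one_div_of_le (hApos t)
    rw [ha]
    have h1 : (0:ℝ) ≤ c * ((t:ℝ) - 1) := mul_nonneg hcpos.le (by linarith)
    have h2 : (0:ℝ) ≤ c * (δ * ((t:ℝ) + 1)) :=
      mul_nonneg hcpos.le (mul_nonneg hδ0.le (by positivity))
    nlinarith [h1, h2]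
  have half_le : (1:ℝ)/2 ≤ (t:ℝ) / ((t:ℝ) + 1) := by
    rw [le_div_iff₀ htp]; linarith
  have part2 : 1 / (2 * (1 + 8 * c * (t:ℝ))) ≤ δseq t := by
    have e : 1 / (2 * (1 + 8 * c * (t:ℝ))) = (1/2) * (1 / (1 + 8 * c * (t:ℝ))) := by
      rw [one_div_mul_eq_div, div_div]
      ring_nf
    have hmul : (1/2) * (1 / (1 + 8 * c * (t:ℝ)))
        ≤ ((t:ℝ) / ((t:ℝ) + 1)) * (1 / (1 + a * ((t:ℝ) + 1))) :=
      mul_le_mul half_le hq (by positivity) (by positivity)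
    have hδnn : (0:ℝ) ≤ δ / ((t:ℝ) + 1) := by positivity
    rw [e]
    linarith [part1]
  refine ⟨part1, part2, ?_⟩
  intro β hβ hTβ
  have hεβ : (t:ℝ) * ε ≤ β * δ := by
    have h := mul_le_mul_of_nonneg_right hTβ hε.le
    rwa [div_mul_cancel₀ _ hε.ne'] at h
  have hct : c * (t:ℝ) ≤ β := by
    rw [hc, div_mul_eq_mul_div, div_le_iff₀ hδ0]
    linarith
  have hctnn : (0:ℝ) ≤ c * (t:ℝ) := by positivity
  have hcmp : 1 / (2 * (1 + 8 * β)) ≤ 1 / (2 * (1 + 8 * c * (t:ℝ))) := by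
    apply one_div_le_one_div_of_le (by linarith) (by linarith)
  linarith [part2]
end

section
/- Let D be a probability measure and let E_{g_0}, E_{g_1}, E_{g_2} ⊆ X be measurable sets satisfying: D(E_{g_0}) ≤ 11ε² + 8εΔ; D(E_{g_1}) ≤ 26ε² + 11εΔ; D(E_{g_1} | E_{g_0}) ≤ 9ε; D(E_{g_2} | E_{g_0}) ≤ 12ε; and D(E_{g_2} | E_{g_1}) ≤ 12ε. Then D(E_{g_0} ∩ E_{g_1}) + D(E_{g_0} ∩ E_{g_2}) + D(E_{g_1} ∩ E_{g_2}) ≤ 543ε³ + 300ε²Δ, and consequently the unweighted majority vote of three classifiers with these error sets has risk at most 543ε³ + 300ε²Δ on D. -/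
open MeasureTheory

lemma condProb_mul {X : Type*} [MeasurableSpace X]
    (D : Measure X) [IsProbabilityMeasure D] (A B : Set X) :
    (D (A ∩ B)).toReal = condProb D A B * (D B).toReal := by
  unfold condProb
  rcases eq_or_ne (D B) 0 with h | h
  · have : D (A ∩ B) = 0 := measure_mono_null Set.inter_subset_right h
    simp [this, h]
  · have hfin : D B ≠ ⊤ := measure_ne_top D B
    rw [div_mul_eq_mul_div, mul_div_assoc, div_self (by
      simpa [ENNReal.toReal_eq_zero_iff, hfin] using h), mul_one]

/-- Combination step of the hierarchical (depth-2, width-3) dynamic benchmark upper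
bound: the pairwise intersections of the error sets `E_{g_0}, E_{g_1}, E_{g_2}` have
total mass at most `543ε³ + 300ε²Δ`, hence so does the error set of the unweighted
majority vote (points lying in at least two error sets). -/
theorem hierarchical_combination_bound {X : Type*} [MeasurableSpace X]
    (D : Measure X) [IsProbabilityMeasure D]
    (E0 E1 E2 : Set X)
    (hE0 : MeasurableSet E0) (hE1 : MeasurableSet E1) (hE2 : MeasurableSet E2)
    (ε Δ : ℝ) (hε : 0 < ε) (hΔ : 0 ≤ Δ)
    (h0 : (D E0).toReal ≤ 11 * ε ^ 2 + 8 * ε * Δ)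
    (h1 : (D E1).toReal ≤ 26 * ε ^ 2 + 11 * ε * Δ)
    (h10 : condProb D E1 E0 ≤ 9 * ε)
    (h20 : condProb D E2 E0 ≤ 12 * ε)
    (h21 : condProb D E2 E1 ≤ 12 * ε) :
    (D (E0 ∩ E1)).toReal + (D (E0 ∩ E2)).toReal + (D (E1 ∩ E2)).toReal
        ≤ 543 * ε ^ 3 + 300 * ε ^ 2 * Δ ∧
    (D {x | (x ∈ E0 ∧ x ∈ E1) ∨ (x ∈ E0 ∧ x ∈ E2) ∨ (x ∈ E1 ∧ x ∈ E2)}).toReal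
        ≤ 543 * ε ^ 3 + 300 * ε ^ 2 * Δ := by
  have hc0 : 0 ≤ condProb D E1 E0 := div_nonneg ENNReal.toReal_nonneg ENNReal.toReal_nonneg
  have hc1 : 0 ≤ condProb D E2 E0 := div_nonneg ENNReal.toReal_nonneg ENNReal.toReal_nonneg
  have hc2 : 0 ≤ condProb D E2 E1 := div_nonneg ENNReal.toReal_nonneg ENNReal.toReal_nonneg
  have ht0 : 0 ≤ (D E0).toReal := ENNReal.toReal_nonneg
  have ht1 : 0 ≤ (D E1).toReal := ENNReal.toReal_nonneg
  have b01 : (D (E1 ∩ E0)).toReal ≤ 9 * ε * (11 * ε ^ 2 + 8 * ε * Δ) := by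
    rw [condProb_mul]
    exact mul_le_mul h10 h0 ht0 (by positivity)
  have b02 : (D (E2 ∩ E0)).toReal ≤ 12 * ε * (11 * ε ^ 2 + 8 * ε * Δ) := by
    rw [condProb_mul]
    exact mul_le_mul h20 h0 ht0 (by positivity)
  have b12 : (D (E2 ∩ E1)).toReal ≤ 12 * ε * (26 * ε ^ 2 + 11 * ε * Δ) := by
    rw [condProb_mul]
    exact mul_le_mul h21 h1 ht1 (by positivity)
  rw [Set.inter_comm E0 E1, Set.inter_comm E0 E2, Set.inter_comm E1 E2]
  have hsum : (D (E1 ∩ E0)).toReal + (D (E2 ∩ E0)).toReal + (D (E2 ∩ E1)).toReal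
      ≤ 543 * ε ^ 3 + 300 * ε ^ 2 * Δ := by nlinarith
  refine ⟨hsum, ?_⟩
  have hset : {x | (x ∈ E0 ∧ x ∈ E1) ∨ (x ∈ E0 ∧ x ∈ E2) ∨ (x ∈ E1 ∧ x ∈ E2)}
      = (E1 ∩ E0) ∪ ((E2 ∩ E0) ∪ (E2 ∩ E1)) := by
    ext x; simp [Set.mem_inter_iff, and_comm, or_assoc]
  rw [hset]
  calc (D ((E1 ∩ E0) ∪ ((E2 ∩ E0) ∪ (E2 ∩ E1)))).toReal
      ≤ (D (E1 ∩ E0)).toReal + ((D (E2 ∩ E0)).toReal + (D (E2 ∩ E1)).toReal) := by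
        refine le_trans (ENNReal.toReal_mono ?_ (measure_union_le _ _)) ?_
        · finiteness
        · rw [ENNReal.toReal_add (measure_ne_top _ _) (measure_ne_top _ _)]
          gcongr
          refine le_trans (ENNReal.toReal_mono ?_ (measure_union_le _ _)) ?_
          · finiteness
          · rw [ENNReal.toReal_add (measure_ne_top _ _) (measure_ne_top _ _)]
    _ ≤ 543 * ε ^ 3 + 300 * ε ^ 2 * Δ := by linarith
end

section
/- Let D be a probability distribution on a finite set X, f : X → {−1,1}, and for a classifier h : X → ℝ let E_h = {x : h(x)f(x) < 1} be its set of margin errors, assumed nonempty with D(E_h) > 0. Let D̄_h = D conditioned on E_h, and let h̄ : X → {−1,1} satisfy R_{D̄_h}(h̄) ≤ ε for some ε < 1/2, where R_P(g) = P({x : g(x) ≠ f(x)}). Then, viewing functions as vectors indexed by X, the gradient of the hinge risk R_D^hinge(h) = Σ_x max(1 − h(x)f(x), 0)·D(x) satisfies ⟨h̄, ∇_h R_D^hinge⟩ = −D(E_h)·⟨h̄, f ∘ D̄_h⟩ ≤ −D(E_h)(1 − 2ε) < 0; i.e., h̄ is a descent direction for the hinge risk. -/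
open Finset

/-! The gradient of the hinge risk is `-D(E_h)` times the label-weighted conditional distribution
`f ∘ D̄_h`, and for `±1`-valued `h̄` and `f` the pairing `⟨h̄, f ∘ D̄_h⟩` equals `1 - 2 R_{D̄_h}(h̄)`,
since `h̄ x * f x` is `1` on agreements and `-1` on disagreements and `D̄_h` has total mass one. -/

lemma mul_eq_ite_ne_of_sign {a b : ℝ} (ha : a = 1 ∨ a = -1) (hb : b = 1 ∨ b = -1) :
    a * b = if a ≠ b then -1 else 1 := by
  rcases ha with rfl | rfl <;> rcases hb with rfl | rfl <;> norm_num

lemma sum_conditional_eq_one {X : Type*} [Fintype X] (p : X → Prop) [DecidablePred p]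
    (D : X → ℝ) (DE : ℝ) (hDE : DE = ∑ x ∈ univ.filter p, D x) (hne : DE ≠ 0)
    (Dbar : X → ℝ) (hDbar : ∀ x, Dbar x = if p x then D x / DE else 0) :
    ∑ x, Dbar x = 1 := by
  rw [Fintype.sum_congr _ _ hDbar, ← sum_filter, ← sum_div, ← hDE, div_self hne]

lemma sum_sign_mul_eq_one_sub_two_mul_risk {X : Type*} [Fintype X] [DecidableEq ℝ]
    (g f P : X → ℝ) (hg : ∀ x, g x = 1 ∨ g x = -1) (hf : ∀ x, f x = 1 ∨ f x = -1)
    (hP : ∑ x, P x = 1) :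
    ∑ x, g x * (f x * P x) = 1 - 2 * ∑ x ∈ univ.filter (fun x => g x ≠ f x), P x := by
  have hterm : ∀ x, g x * (f x * P x) = P x - 2 * (if g x ≠ f x then P x else 0) := by
    intro x
    rw [← mul_assoc, mul_eq_ite_ne_of_sign (hg x) (hf x)]
    split_ifs <;> ring
  rw [Fintype.sum_congr _ _ hterm, sum_sub_distrib, ← mul_sum, ← sum_filter, hP]

lemma hinge_grad_eq_neg_mul_conditional {X : Type*} (D f h Dbar grad : X → ℝ) (DE : ℝ)
    (hne : DE ≠ 0) (hDbar : ∀ x, Dbar x = if h x * f x < 1 then D x / DE else 0)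
    (hgrad : ∀ x, grad x = if h x * f x < 1 then -f x * D x else 0) (x : X) :
    grad x = -DE * (f x * Dbar x) := by
  rw [hgrad, hDbar]
  split_ifs
  · field_simp
  · simp

open Classical in
theorem hinge_descent_direction_general {X : Type*} [Fintype X]
    (D : X → ℝ)
    (f : X → ℝ) (hf : ∀ x, f x = 1 ∨ f x = -1)
    (h : X → ℝ)
    (DE : ℝ) (hDE : DE = ∑ x ∈ Finset.univ.filter (fun x => h x * f x < 1), D x)
    (hDEpos : 0 < DE)
    (Dbar : X → ℝ) (hDbar : ∀ x, Dbar x = if h x * f x < 1 then D x / DE else 0)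
    (hbar : X → ℝ) (hbarpm : ∀ x, hbar x = 1 ∨ hbar x = -1)
    (ε : ℝ) (hε : ε < 1 / 2)
    (hrisk : ∑ x ∈ Finset.univ.filter (fun x => hbar x ≠ f x), Dbar x ≤ ε)
    (grad : X → ℝ) (hgrad : ∀ x, grad x = if h x * f x < 1 then -f x * D x else 0) :
    (∑ x, hbar x * grad x) = -DE * (∑ x, hbar x * (f x * Dbar x)) ∧
    (∑ x, hbar x * grad x) ≤ -DE * (1 - 2 * ε) ∧
    (∑ x, hbar x * grad x) < 0 := by
  have hgrad' := hinge_grad_eq_neg_mul_conditional D f h Dbar grad DE hDEpos.ne' hDbar hgrad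
  have hpairing : ∑ x, hbar x * grad x = -DE * ∑ x, hbar x * (f x * Dbar x) := by
    rw [mul_sum]
    exact sum_congr rfl fun x _ => by rw [hgrad']; ring
  have hinner := sum_sign_mul_eq_one_sub_two_mul_risk hbar f Dbar hbarpm hf
    (sum_conditional_eq_one _ D DE hDE hDEpos.ne' Dbar hDbar)
  have hbound : ∑ x, hbar x * grad x ≤ -DE * (1 - 2 * ε) := by
    rw [hpairing, hinner]
    exact mul_le_mul_of_nonpos_left (by linarith) (by linarith)
  have hmargin : 0 < DE * (1 - 2 * ε) := mul_pos hDEpos (by linarith)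
  exact ⟨hpairing, hbound, by linarith⟩

open Classical in
/-- A model `h̄` built on the margin-error distribution of `h` is a descent direction
for the hinge risk: `⟨h̄, ∇ R^hinge⟩ = −D(E_h)·⟨h̄, f∘D̄_h⟩ ≤ −D(E_h)(1−2ε) < 0`. -/
theorem hinge_descent_direction {X : Type*} [Fintype X]
    (D : X → ℝ) (hDnn : ∀ x, 0 ≤ D x) (hDsum : ∑ x, D x = 1)
    (f : X → ℝ) (hf : ∀ x, f x = 1 ∨ f x = -1)
    (h : X → ℝ)
    (DE : ℝ) (hDE : DE = ∑ x ∈ Finset.univ.filter (fun x => h x * f x < 1), D x)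
    (hDEpos : 0 < DE)
    (Dbar : X → ℝ) (hDbar : ∀ x, Dbar x = if h x * f x < 1 then D x / DE else 0)
    (hbar : X → ℝ) (hbarpm : ∀ x, hbar x = 1 ∨ hbar x = -1)
    (ε : ℝ) (hε : ε < 1 / 2)
    (hrisk : ∑ x ∈ Finset.univ.filter (fun x => hbar x ≠ f x), Dbar x ≤ ε)
    (grad : X → ℝ) (hgrad : ∀ x, grad x = if h x * f x < 1 then -f x * D x else 0) :
    (∑ x, hbar x * grad x) = -DE * (∑ x, hbar x * (f x * Dbar x)) ∧
    (∑ x, hbar x * grad x) ≤ -DE * (1 - 2 * ε) ∧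
    (∑ x, hbar x * grad x) < 0 :=
  hinge_descent_direction_general D f hf h DE hDE hDEpos Dbar hDbar hbar hbarpm ε hε hrisk grad
    hgrad
end

section
/- Let D be a probability distribution on a finite set X, f : X → {−1,1}, h : X → ℝ, and define the reweighted distribution D_h(x) = D(x)exp(−h(x)f(x))/Z_h where Z_h = Σ_x D(x)exp(−h(x)f(x)). Let h̃ : X → {−1,1} and set r = R_{D_h}(h̃) = D_h({x : h̃(x) ≠ f(x)}), assumed to lie in (0,1). Then the exponential risk R_D^exp(h + η h̃) = Σ_x exp(−(h(x)+η h̃(x))f(x))D(x), viewed as a function of η ∈ ℝ, is minimized at η* = (1/2)·log(1/r − 1), and R_D^exp(h + η* h̃) = 2 Z_h √(r(1−r)). -/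
/-!
With the boosting weights `w x = D x · exp (-h x · f x)`, each term of the exponential risk of
`h + η h̃` picks up a factor `exp (-η)` where `h̃` agrees with `f` and `exp η` where it does not,
so the risk is `Z (1 - r) exp (-η) + Z r exp η`. A function `a exp (-η) + b exp η` with `a, b > 0`
is at least `2 √(a b)` by AM-GM, with equality where both terms agree, at `η = log (a / b) / 2`.
-/

open Finset Real

lemma two_mul_sqrt_mul_le_add {x y : ℝ} (hx : 0 ≤ x) (hy : 0 ≤ y) :
    2 * √(x * y) ≤ x + y := by
  rw [sqrt_mul hx]
  nlinarith [sq_nonneg (√x - √y), sq_sqrt hx, sq_sqrt hy]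

lemma two_mul_sqrt_mul_le_mul_exp_neg_add_mul_exp {a b : ℝ} (ha : 0 ≤ a) (hb : 0 ≤ b) (η : ℝ) :
    2 * √(a * b) ≤ a * exp (-η) + b * exp η := by
  have hprod : a * exp (-η) * (b * exp η) = a * b := by
    rw [exp_neg]; field_simp
  calc 2 * √(a * b) = 2 * √(a * exp (-η) * (b * exp η)) := by rw [hprod]
    _ ≤ a * exp (-η) + b * exp η :=
      two_mul_sqrt_mul_le_add (by positivity) (by positivity)

lemma mul_exp_neg_add_mul_exp_half_log_div {a b : ℝ} (ha : 0 < a) (hb : 0 < b) :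
    a * exp (-(1 / 2 * log (a / b))) + b * exp (1 / 2 * log (a / b)) = 2 * √(a * b) := by
  have hexp : exp (1 / 2 * log (a / b)) = √(a / b) := by
    rw [sqrt_eq_rpow, rpow_def_of_pos (by positivity), mul_comm]
  obtain ⟨u, hu, rfl⟩ : ∃ u, 0 < u ∧ a = u ^ 2 := ⟨√a, sqrt_pos.2 ha, (sq_sqrt ha.le).symm⟩
  obtain ⟨v, hv, rfl⟩ : ∃ v, 0 < v ∧ b = v ^ 2 := ⟨√b, sqrt_pos.2 hb, (sq_sqrt hb.le).symm⟩
  rw [exp_neg, hexp, ← div_pow, ← mul_pow, sqrt_sq (by positivity), sqrt_sq (by positivity)]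
  field_simp
  ring

lemma exp_neg_mul_eq_ite {s t : ℝ} (hs : s = 1 ∨ s = -1) (ht : t = 1 ∨ t = -1) (c η : ℝ) :
    exp (-((c + η * t) * s)) = exp (-(c * s)) * if t = s then exp (-η) else exp η := by
  rcases hs with rfl | rfl <;> rcases ht with rfl | rfl <;> norm_num <;>
    rw [← exp_add] <;> ring_nf

lemma sum_exp_neg_margin_eq {X : Type*} [Fintype X]
    (D f h htil : X → ℝ) (hf : ∀ x, f x = 1 ∨ f x = -1) (htilpm : ∀ x, htil x = 1 ∨ htil x = -1)
    (η : ℝ) :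
    ∑ x, exp (-((h x + η * htil x) * f x)) * D x =
      exp (-η) * ∑ x ∈ univ.filter (fun x => htil x = f x), D x * exp (-(h x * f x)) +
      exp η * ∑ x ∈ univ.filter (fun x => htil x ≠ f x), D x * exp (-(h x * f x)) := by
  simp_rw [exp_neg_mul_eq_ite (hf _) (htilpm _), mul_sum, ← sum_filter_add_sum_filter_not univ
    (fun x => htil x = f x)]
  congr 1
  · refine sum_congr rfl fun x hx => ?_
    rw [if_pos (mem_filter.1 hx).2]
    ring
  · refine sum_congr rfl fun x hx => ?_
    rw [if_neg (mem_filter.1 hx).2]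
    ring

open Classical in
theorem exp_loss_optimal_step_general {X : Type*} [Fintype X]
    (D : X → ℝ) (hDnn : ∀ x, 0 ≤ D x)
    (f : X → ℝ) (hf : ∀ x, f x = 1 ∨ f x = -1)
    (h : X → ℝ)
    (Z : ℝ) (hZ : Z = ∑ x, D x * Real.exp (-(h x * f x)))
    (Dh : X → ℝ) (hDh : ∀ x, Dh x = D x * Real.exp (-(h x * f x)) / Z)
    (htil : X → ℝ) (htilpm : ∀ x, htil x = 1 ∨ htil x = -1)
    (r : ℝ) (hr : r = ∑ x ∈ Finset.univ.filter (fun x => htil x ≠ f x), Dh x)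
    (hr0 : 0 < r) (hr1 : r < 1)
    (Rexp : ℝ → ℝ)
    (hRexp : ∀ η, Rexp η = ∑ x, Real.exp (-((h x + η * htil x) * f x)) * D x) :
    (∀ η, Rexp ((1 / 2) * Real.log (1 / r - 1)) ≤ Rexp η) ∧
    Rexp ((1 / 2) * Real.log (1 / r - 1)) = 2 * Z * Real.sqrt (r * (1 - r)) := by
  have hZ0 : 0 ≤ Z := hZ ▸ sum_nonneg fun x _ => mul_nonneg (hDnn x) (exp_pos _).le
  have hr_div : r = (∑ x ∈ univ.filter (fun x => htil x ≠ f x), D x * exp (-(h x * f x))) / Z := by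
    rw [hr, sum_div]
    exact sum_congr rfl fun x _ => hDh x
  -- `Z = 0` would give `Dh = 0` through division by zero, hence `r = 0`.
  have hZpos : 0 < Z := hZ0.lt_of_ne' fun hZ0 => by rw [hZ0, div_zero] at hr_div; linarith
  have hmiss : ∑ x ∈ univ.filter (fun x => htil x ≠ f x), D x * exp (-(h x * f x)) = Z * r := by
    rw [hr_div]; field_simp
  have hhit : ∑ x ∈ univ.filter (fun x => htil x = f x), D x * exp (-(h x * f x)) =
      Z * (1 - r) := by
    have := sum_filter_add_sum_filter_not univ (fun x => htil x = f x)
      fun x => D x * exp (-(h x * f x))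
    simp only [← ne_eq, ← hZ, hmiss] at this
    linarith
  have hR : ∀ η, Rexp η = Z * (1 - r) * exp (-η) + Z * r * exp η := fun η => by
    rw [hRexp, sum_exp_neg_margin_eq D f h htil hf htilpm, hhit, hmiss]
    ring
  have hlog : 1 / r - 1 = Z * (1 - r) / (Z * r) := by field_simp
  have hmin := mul_exp_neg_add_mul_exp_half_log_div (a := Z * (1 - r)) (b := Z * r)
    (mul_pos hZpos (by linarith)) (by positivity)
  have hsqrt : 2 * √(Z * (1 - r) * (Z * r)) = 2 * Z * √(r * (1 - r)) := by
    rw [show Z * (1 - r) * (Z * r) = Z ^ 2 * (r * (1 - r)) by ring, sqrt_mul (sq_nonneg _),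
      sqrt_sq hZ0, mul_assoc]
  rw [hlog, hR, hmin, hsqrt]
  refine ⟨fun η => ?_, rfl⟩
  rw [hR, ← hsqrt]
  exact two_mul_sqrt_mul_le_mul_exp_neg_add_mul_exp
    (mul_nonneg hZ0 (by linarith)) (by positivity) η

open Classical in
/-- The exponential risk `η ↦ R_D^exp(h + η h̃)` is minimized at
`η* = (1/2)·log(1/r − 1)` where `r = R_{D_h}(h̃)`, with minimum value `2 Z_h √(r(1−r))`. -/
theorem exp_loss_optimal_step {X : Type*} [Fintype X]
    (D : X → ℝ) (hDnn : ∀ x, 0 ≤ D x) (hDsum : ∑ x, D x = 1)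
    (f : X → ℝ) (hf : ∀ x, f x = 1 ∨ f x = -1)
    (h : X → ℝ)
    (Z : ℝ) (hZ : Z = ∑ x, D x * Real.exp (-(h x * f x)))
    (Dh : X → ℝ) (hDh : ∀ x, Dh x = D x * Real.exp (-(h x * f x)) / Z)
    (htil : X → ℝ) (htilpm : ∀ x, htil x = 1 ∨ htil x = -1)
    (r : ℝ) (hr : r = ∑ x ∈ Finset.univ.filter (fun x => htil x ≠ f x), Dh x)
    (hr0 : 0 < r) (hr1 : r < 1)
    (Rexp : ℝ → ℝ)
    (hRexp : ∀ η, Rexp η = ∑ x, Real.exp (-((h x + η * htil x) * f x)) * D x) :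
    (∀ η, Rexp ((1 / 2) * Real.log (1 / r - 1)) ≤ Rexp η) ∧
    Rexp ((1 / 2) * Real.log (1 / r - 1)) = 2 * Z * Real.sqrt (r * (1 - r)) :=
  exp_loss_optimal_step_general D hDnn f hf h Z hZ Dh hDh htil htilpm r hr hr0 hr1 Rexp hRexp
end

section
/- Let r_t ∈ [0, 1/2 − γ] for all t ≥ 0 with γ = 1/2 − ε > 0 (i.e., each weak classifier has risk at most ε < 1/2 on its reweighted distribution). Define Z-products as in AdaBoost: the zero-one risk of the aggregated classifier h_T = Σ_{t<T} η_t h̃_t with optimal step sizes η_t = (1/2)log(1/r_t − 1) satisfies R_D(h_T) ≤ Π_{t<T} 2√(r_t(1−r_t)) ≤ Π_{t<T} √(1 − 4γ²) ≤ exp(−2γ²T) = exp(−(1−2ε)²T/2). -/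
/-!
Track the exponential loss `L_t = ∑ₓ D x · exp (-(h_t x · f x))`, which starts at `1` and
dominates the zero-one risk because `exp (-m) ≥ 1` whenever the margin `m` is `≤ 0`. A round
multiplies each weight by `exp η` on a mistake and by `exp (-η)` otherwise, so
`L_{t+1} = (r e^η + (1 - r) e^{-η}) L_t`; the optimal step `e^η = √((1 - r) / r)` turns the
factor into `2√(r(1 - r)) = √(1 - (1 - 2r)²) ≤ √(1 - 4γ²) ≤ exp (-2γ²)`.
-/

open Real Finset

noncomputable section

namespace AdaBoost

variable {X : Type*} [Fintype X]

def expLoss (D f h : X → ℝ) : ℝ :=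
  ∑ x, D x * exp (-(h x * f x))

def weightedError (D f h g : X → ℝ) : ℝ :=
  ∑ x ∈ univ.filter (fun x => g x ≠ f x), D x * exp (-(h x * f x))

def optimalStep (r : ℝ) : ℝ :=
  1 / 2 * log (1 / r - 1)

theorem expLoss_nonneg {D : X → ℝ} (hD : ∀ x, 0 ≤ D x) (f h : X → ℝ) :
    0 ≤ expLoss D f h :=
  sum_nonneg fun x _ => mul_nonneg (hD x) (exp_nonneg _)

theorem sum_filter_margin_nonpos_le_expLoss {D : X → ℝ} (hD : ∀ x, 0 ≤ D x) (f h : X → ℝ) :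
    ∑ x ∈ univ.filter (fun x => h x * f x ≤ 0), D x ≤ expLoss D f h :=
  calc ∑ x ∈ univ.filter (fun x => h x * f x ≤ 0), D x
      ≤ ∑ x ∈ univ.filter (fun x => h x * f x ≤ 0), D x * exp (-(h x * f x)) := by
        refine sum_le_sum fun x hx => le_mul_of_one_le_right (hD x) (one_le_exp ?_)
        linarith [(mem_filter.mp hx).2]
    _ ≤ expLoss D f h :=
        sum_le_sum_of_subset_of_nonneg (filter_subset _ _)
          fun x _ _ => mul_nonneg (hD x) (exp_nonneg _)

theorem mul_eq_neg_one_of_ne {R : Type*} [Ring R] {a b : R} (ha : a = 1 ∨ a = -1)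
    (hb : b = 1 ∨ b = -1) (hab : a ≠ b) : a * b = -1 := by
  rcases ha with rfl | rfl <;> rcases hb with rfl | rfl <;> norm_num at *

theorem expLoss_add_mul {f g : X → ℝ} (hf : ∀ x, f x = 1 ∨ f x = -1)
    (hg : ∀ x, g x = 1 ∨ g x = -1) (D h : X → ℝ) (η : ℝ) :
    expLoss D f (fun x => h x + η * g x) =
      exp η * weightedError D f h g + exp (-η) * (expLoss D f h - weightedError D f h g) := by
  have hcorrect : expLoss D f h - weightedError D f h g =
      ∑ x ∈ univ.filter (fun x => ¬g x ≠ f x), D x * exp (-(h x * f x)) := by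
    rw [expLoss, weightedError, ← sum_filter_add_sum_filter_not univ (fun x => g x ≠ f x)]
    ring
  have hmargin : ∀ x, -((h x + η * g x) * f x) = -(h x * f x) + -(η * (g x * f x)) :=
    fun x => by ring
  rw [hcorrect, weightedError, mul_sum, mul_sum, expLoss,
    ← sum_filter_add_sum_filter_not univ (fun x => g x ≠ f x)]
  congr 1 <;> refine sum_congr rfl fun x hx => ?_
  · rw [hmargin, mul_eq_neg_one_of_ne (hg x) (hf x) (mem_filter.mp hx).2, mul_neg_one, neg_neg,
      exp_add]
    ring
  · rw [hmargin, not_not.mp (mem_filter.mp hx).2, mul_self_eq_one_iff.mpr (hf x), mul_one,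
      exp_add]
    ring

theorem exp_optimalStep_mul_add {r : ℝ} (hr0 : 0 < r) (hr1 : r < 1) :
    exp (optimalStep r) * r + exp (-optimalStep r) * (1 - r) = 2 * √(r * (1 - r)) := by
  set y := (1 - r) / r with hy
  have hy0 : 0 < y := div_pos (by linarith) hr0
  have hexp : exp (optimalStep r) = √y := by
    rw [optimalStep, show 1 / 2 * log (1 / r - 1) = log y / 2 by rw [hy]; field_simp, exp_half,
      exp_log hy0]
  have hsqrt : √y * r = √(r * (1 - r)) :=
    calc √y * r = √y * √(r ^ 2) := by rw [sqrt_sq hr0.le]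
      _ = √(y * r ^ 2) := (sqrt_mul hy0.le _).symm
      _ = √(r * (1 - r)) := by
        congr 1
        rw [hy]
        field_simp
  -- the optimal step balances the two parts of the loss: `(1 - r) e^{-η} = r e^η`
  have hbalance : (1 - r) / √y = √y * r := by
    rw [div_eq_iff (sqrt_pos.mpr hy0).ne', mul_right_comm, mul_self_sqrt hy0.le, hy]
    field_simp
  rw [exp_neg, hexp, mul_comm (√y)⁻¹, ← div_eq_mul_inv, hbalance, hsqrt]
  ring

theorem expLoss_add_optimalStep_mul {f g : X → ℝ} (hf : ∀ x, f x = 1 ∨ f x = -1)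
    (hg : ∀ x, g x = 1 ∨ g x = -1) {D h : X → ℝ} {r : ℝ}
    (hr : r = weightedError D f h g / expLoss D f h) (hr0 : 0 < r) (hr1 : r < 1) :
    expLoss D f (fun x => h x + optimalStep r * g x) = 2 * √(r * (1 - r)) * expLoss D f h := by
  -- a vanishing loss would give `r = W / 0 = 0`
  have hL : expLoss D f h ≠ 0 := fun hL => by rw [hL, div_zero] at hr; linarith
  have hW : weightedError D f h g = r * expLoss D f h := by rw [hr, div_mul_cancel₀ _ hL]
  rw [expLoss_add_mul hf hg, hW, ← exp_optimalStep_mul_add hr0 hr1]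
  ring

theorem sqrt_one_sub_le_exp_neg_half (u : ℝ) : √(1 - u) ≤ exp (-(u / 2)) := by
  rw [show -(u / 2) = -u / 2 by ring, exp_half]
  exact sqrt_le_sqrt (by linarith [add_one_le_exp (-u)])

theorem two_mul_sqrt_mul_one_sub_le_exp {r γ : ℝ} (hγ : 0 ≤ γ) (hr : r ≤ 1 / 2 - γ) :
    2 * √(r * (1 - r)) ≤ exp (-(2 * γ ^ 2)) :=
  calc 2 * √(r * (1 - r)) = √(1 - (1 - 2 * r) ^ 2) := by
        rw [show 1 - (1 - 2 * r) ^ 2 = 2 ^ 2 * (r * (1 - r)) by ring, sqrt_mul (sq_nonneg 2),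
          sqrt_sq zero_le_two]
    _ ≤ √(1 - (2 * γ) ^ 2) := sqrt_le_sqrt (by nlinarith)
    _ ≤ exp (-((2 * γ) ^ 2 / 2)) := sqrt_one_sub_le_exp_neg_half _
    _ = exp (-(2 * γ ^ 2)) := by ring_nf

end AdaBoost

end

open AdaBoost

open Classical in
/-- AdaBoost-style convergence: if every weak classifier has risk
`r t ≤ 1/2 − γ = ε < 1/2` on the exponentially reweighted distribution, then after `T`
rounds with optimal step sizes `η t = (1/2)log(1/r t − 1)` the zero-one risk of the
aggregated classifier satisfies `R_D(h_T) ≤ exp(−(1−2ε)²T/2)`. -/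
theorem adaboost_risk_bound {X : Type*} [Fintype X]
    (D : X → ℝ) (hDnn : ∀ x, 0 ≤ D x) (hDsum : ∑ x, D x = 1)
    (f : X → ℝ) (hf : ∀ x, f x = 1 ∨ f x = -1)
    (ε γ : ℝ) (hγ : γ = 1 / 2 - ε) (hγ0 : 0 < γ)
    (T : ℕ)
    (htil : ℕ → X → ℝ) (htilpm : ∀ t x, htil t x = 1 ∨ htil t x = -1)
    (h : ℕ → X → ℝ) (hinit : ∀ x, h 0 x = 0)
    (r η : ℕ → ℝ)
    (hr : ∀ t, r t =
      (∑ x ∈ Finset.univ.filter (fun x => htil t x ≠ f x),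
          D x * Real.exp (-(h t x * f x)))
        / ∑ x, D x * Real.exp (-(h t x * f x)))
    (hrpos : ∀ t, 0 < r t) (hrub : ∀ t, r t ≤ 1 / 2 - γ)
    (hη : ∀ t, η t = (1 / 2) * Real.log (1 / r t - 1))
    (hrec : ∀ t x, h (t + 1) x = h t x + η t * htil t x) :
    ∑ x ∈ Finset.univ.filter (fun x => h T x * f x ≤ 0), D x
      ≤ Real.exp (-(1 - 2 * ε) ^ 2 * (T : ℝ) / 2) := by
  have hstep : ∀ t, expLoss D f (h (t + 1)) = 2 * √(r t * (1 - r t)) * expLoss D f (h t) := by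
    intro t
    have hh : h (t + 1) = fun x => h t x + optimalStep (r t) * htil t x :=
      funext fun x => by rw [hrec, hη, optimalStep]
    rw [hh]
    exact expLoss_add_optimalStep_mul hf (htilpm t) (hr t) (hrpos t) (by linarith [hrub t])
  have hinitLoss : expLoss D f (h 0) = 1 := by simp [expLoss, hinit, hDsum]
  calc ∑ x ∈ Finset.univ.filter (fun x => h T x * f x ≤ 0), D x
      ≤ expLoss D f (h T) := sum_filter_margin_nonpos_le_expLoss hDnn f (h T)
    _ ≤ exp (-(2 * γ ^ 2)) ^ T * expLoss D f (h 0) := by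
        refine le_geom (u := fun t => expLoss D f (h t)) (exp_nonneg _) T fun t _ => ?_
        rw [hstep]
        exact mul_le_mul_of_nonneg_right (two_mul_sqrt_mul_one_sub_le_exp hγ0.le (hrub t))
          (expLoss_nonneg hDnn f (h t))
    _ = exp (-(1 - 2 * ε) ^ 2 * (T : ℝ) / 2) := by
        rw [hinitLoss, mul_one, ← exp_nat_mul, hγ]
        ring_nf
end
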